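/- Let γ, x₀, x₁ ∈ Ω. Then the exact WKB solutions satisfy the Wronskian formula 𝒲(u^±(x,h;γ,x₀), u^∓(x,h;γ,x₁)) = ∓4·w_even^±(x₁,h;x₀), where 𝒲(f,g) = det(f,g); in particular the Wronskian is independent of x. -/

import Mathlib

/-!
STATEMENT 4 (Proposition 2.2, Wronskian formula).

For base points `γ, x₀, x₁ ∈ Ω`, the exact WKB solutions satisfy
`𝒲(u^±(x,h;γ,x₀), u^∓(x,h;γ,x₁)) = ∓4 w_even^±(x₁,h;x₀)` for every `x ∈ Ω`;
in particular the Wronskian is independent of `x`.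

The summed series `(w_even^±, w_odd^±)` with base point `x₀` are characterized by the
(summed) recurrence: `w_even^±(x₀) = 1`, `w_odd^±(x₀) = 0`, `(w_even^±)' = c w_odd^±`,
`(w_odd^±)' ± (2z'/h) w_odd^± = c w_even^±`, with `c = H'/H`, `z' = sq`.
-/

open Complex Set

noncomputable section

/-- Wronskian `𝒲(f,g) = det(f,g)` of two vectors in `ℂ²`. -/
def Wr (f g : ℂ × ℂ) : ℂ := f.1 * g.2 - f.2 * g.1

/-- `(we, wo)` is the pair of summed exact WKB series with sign `s = ±1`, base point
`x₀`, phase derivative `sq` and coefficient `c = H'/H`. -/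
def IsWKBSum (Ω : Set ℂ) (h : ℝ) (s : ℂ) (sq H : ℂ → ℂ) (x₀ : ℂ) (we wo : ℂ → ℂ) : Prop :=
  we x₀ = 1 ∧ wo x₀ = 0 ∧ ∀ x ∈ Ω,
    HasDerivAt we (deriv H x / H x * wo x) x ∧
    HasDerivAt wo (deriv H x / H x * we x - s * (2 * sq x / (h : ℂ)) * wo x) x

/-- The exact WKB solution
`u⁺ = [[1,1],[-i,i]] e^{z/h} Q(x) σ (w_even⁺, w_odd⁺)ᵀ`, written componentwise, where
`Q(x) = [[H⁻¹,H⁻¹],[iH,-iH]]` and `σ = [[0,1],[1,0]]`. -/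
def wkbPlus (h : ℝ) (Z H we wo : ℂ → ℂ) (x : ℂ) : ℂ × ℂ :=
  (Complex.exp (Z x / (h : ℂ)) *
      ((H x)⁻¹ * (wo x + we x) + Complex.I * H x * (wo x - we x)),
   Complex.exp (Z x / (h : ℂ)) *
      (-Complex.I * (H x)⁻¹ * (wo x + we x) - H x * (wo x - we x)))

/-- The exact WKB solution
`u⁻ = [[1,1],[-i,i]] e^{-z/h} Q(x) (w_even⁻, w_odd⁻)ᵀ`, written componentwise. -/
def wkbMinus (h : ℝ) (Z H we wo : ℂ → ℂ) (x : ℂ) : ℂ × ℂ :=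
  (Complex.exp (-Z x / (h : ℂ)) *
      ((H x)⁻¹ * (we x + wo x) + Complex.I * H x * (we x - wo x)),
   Complex.exp (-Z x / (h : ℂ)) *
      (-Complex.I * (H x)⁻¹ * (we x + wo x) - H x * (we x - wo x)))

/-!
Both Wronskians are `∓4 (w_even⁺ w_even⁻ − w_odd⁺ w_odd⁻)`: the exponentials `e^{±z/h}` cancel,
and so do `H` and `H⁻¹`. The recurrences for the `+` and `−` series differ only in the sign of the
`2z'/h` term, so the pairing `w_even⁺ w_even⁻ − w_odd⁺ w_odd⁻` has zero derivative and is constant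
on the connected set `Ω`. Evaluating it at `x₁`, where the series based at `x₁` equal `(1, 0)`,
gives the claim.
-/

theorem Wr_swap (f g : ℂ × ℂ) : Wr g f = -Wr f g := by
  simp only [Wr]
  ring

/-- The factor is `det [[1,1],[-i,i]] · det Q · det σ = (2i)(-2i)(-1)`, independent of `H`. -/
theorem wkb_frame_det (Hx e o e' o' : ℂ) (hH : Hx ≠ 0) :
    (Hx⁻¹ * (o + e) + I * Hx * (o - e)) * (-I * Hx⁻¹ * (e' + o') - Hx * (e' - o')) -
        (-I * Hx⁻¹ * (o + e) - Hx * (o - e)) * (Hx⁻¹ * (e' + o') + I * Hx * (e' - o')) =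
      -4 * (e * e' - o * o') := by
  field_simp
  linear_combination (2 * Hx ^ 2 * (e * e' - o * o')) * I_sq

theorem Wr_wkbPlus_wkbMinus (h : ℝ) (Z H we wo we' wo' : ℂ → ℂ) {x : ℂ} (hH : H x ≠ 0) :
    Wr (wkbPlus h Z H we wo x) (wkbMinus h Z H we' wo' x) =
      -4 * (we x * we' x - wo x * wo' x) := by
  have hexp : exp (Z x / h) * exp (-Z x / h) = 1 := by
    rw [← exp_add, neg_div, add_neg_cancel, exp_zero]
  simp only [Wr, wkbPlus, wkbMinus]
  linear_combination exp (Z x / h) * exp (-Z x / h) *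
      wkb_frame_det (H x) (we x) (wo x) (we' x) (wo' x) hH -
    4 * (we x * we' x - wo x * wo' x) * hexp

namespace IsWKBSum

variable {Ω : Set ℂ} {h : ℝ} {s : ℂ} {sq H : ℂ → ℂ} {a b : ℂ} {we wo we' wo' : ℂ → ℂ}

theorem hasDerivAt_pairing (hP : IsWKBSum Ω h s sq H a we wo)
    (hM : IsWKBSum Ω h (-s) sq H b we' wo') {x : ℂ} (hx : x ∈ Ω) :
    HasDerivAt (fun t => we t * we' t - wo t * wo' t) 0 x := by
  obtain ⟨hwe, hwo⟩ := hP.2.2 x hx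
  obtain ⟨hwe', hwo'⟩ := hM.2.2 x hx
  exact ((hwe.mul hwe').sub (hwo.mul hwo')).congr_deriv (by ring)

theorem pairing_eq (hP : IsWKBSum Ω h s sq H a we wo) (hM : IsWKBSum Ω h (-s) sq H b we' wo')
    (hΩ : IsOpen Ω) (hΩc : IsPreconnected Ω) {x y : ℂ} (hx : x ∈ Ω) (hy : y ∈ Ω) :
    we x * we' x - wo x * wo' x = we y * we' y - wo y * wo' y :=
  hΩ.is_const_of_deriv_eq_zero hΩc
    (fun _ ht => (hP.hasDerivAt_pairing hM ht).differentiableAt.differentiableWithinAt)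
    (fun _ ht => (hP.hasDerivAt_pairing hM ht).deriv) hx hy

end IsWKBSum

theorem wkb_wronskian_formula_general
    (A : ℂ → ℂ) (lam : ℂ) (Ω : Set ℂ)
    (hΩopen : IsOpen Ω) (hΩsc : SimplyConnectedSpace Ω)
    (sq H : ℂ → ℂ)
    (hH : ∀ x ∈ Ω, H x ≠ 0 ∧ (H x) ^ 4 = (A x + lam) / (A x - lam))
    (h : ℝ)
    (x₀ x₁ : ℂ) (hx₁ : x₁ ∈ Ω)
    -- the phase `z(x;γ) = ∫_γ^x √(A²-λ²) dt`
    (Z : ℂ → ℂ)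
    -- `+`-series based at `x₀` and `-`-series based at `x₁`
    (wep wop wem wom : ℂ → ℂ)
    (hP : IsWKBSum Ω h 1 sq H x₀ wep wop)
    (hM : IsWKBSum Ω h (-1) sq H x₁ wem wom)
    -- `-`-series based at `x₀` and `+`-series based at `x₁`
    (wem' wom' wep' wop' : ℂ → ℂ)
    (hM' : IsWKBSum Ω h (-1) sq H x₀ wem' wom')
    (hP' : IsWKBSum Ω h 1 sq H x₁ wep' wop') :
    ∀ x ∈ Ω,
      Wr (wkbPlus h Z H wep wop x) (wkbMinus h Z H wem wom x) = -4 * wep x₁ ∧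
      Wr (wkbMinus h Z H wem' wom' x) (wkbPlus h Z H wep' wop' x) = 4 * wem' x₁ := by
  intro x hx
  have hΩc : IsPreconnected Ω := isPreconnected_iff_preconnectedSpace.mpr inferInstance
  constructor
  · rw [Wr_wkbPlus_wkbMinus _ _ _ _ _ _ _ (hH x hx).1, hP.pairing_eq hM hΩopen hΩc hx hx₁,
      hM.1, hM.2.1]
    ring
  · rw [Wr_swap, Wr_wkbPlus_wkbMinus _ _ _ _ _ _ _ (hH x hx).1,
      hP'.pairing_eq hM' hΩopen hΩc hx hx₁, hP'.1, hP'.2.1]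
    ring

/-- **Proposition 2.2.** Wronskian formula
`𝒲(u^±(·,h;γ,x₀), u^∓(·,h;γ,x₁)) = ∓ 4 w_even^±(x₁,h;x₀)`, for all `x ∈ Ω`. -/
theorem wkb_wronskian_formula
    (A : ℂ → ℂ) (lam : ℂ) (Ω : Set ℂ)
    (hΩopen : IsOpen Ω) (hΩsc : SimplyConnectedSpace Ω)
    (hA : AnalyticOnNhd ℂ A Ω)
    (hnv : ∀ x ∈ Ω, A x ^ 2 - lam ^ 2 ≠ 0)
    (sq H : ℂ → ℂ)
    (hsq_an : AnalyticOnNhd ℂ sq Ω) (hH_an : AnalyticOnNhd ℂ H Ω)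
    (hsq : ∀ x ∈ Ω, sq x ^ 2 = A x ^ 2 - lam ^ 2)
    (hH : ∀ x ∈ Ω, H x ≠ 0 ∧ (H x) ^ 4 = (A x + lam) / (A x - lam))
    (h : ℝ) (hh : 0 < h)
    (γ x₀ x₁ : ℂ) (hγ : γ ∈ Ω) (hx₀ : x₀ ∈ Ω) (hx₁ : x₁ ∈ Ω)
    -- the phase `z(x;γ) = ∫_γ^x √(A²-λ²) dt`
    (Z : ℂ → ℂ) (hZγ : Z γ = 0) (hZ : ∀ x ∈ Ω, HasDerivAt Z (sq x) x)
    -- `+`-series based at `x₀` and `-`-series based at `x₁`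
    (wep wop wem wom : ℂ → ℂ)
    (hP : IsWKBSum Ω h 1 sq H x₀ wep wop)
    (hM : IsWKBSum Ω h (-1) sq H x₁ wem wom)
    -- `-`-series based at `x₀` and `+`-series based at `x₁`
    (wem' wom' wep' wop' : ℂ → ℂ)
    (hM' : IsWKBSum Ω h (-1) sq H x₀ wem' wom')
    (hP' : IsWKBSum Ω h 1 sq H x₁ wep' wop') :
    ∀ x ∈ Ω,
      Wr (wkbPlus h Z H wep wop x) (wkbMinus h Z H wem wom x) = -4 * wep x₁ ∧
      Wr (wkbMinus h Z H wem' wom' x) (wkbPlus h Z H wep' wop' x) = 4 * wem' x₁ :=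
  wkb_wronskian_formula_general A lam Ω hΩopen hΩsc sq H hH h x₀ x₁ hx₁ Z wep wop wem wom hP hM wem'
    wom' wep' wop' hM' hP'

end
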